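/- Assume the CFL condition. Then for all j, k ≥ 0 with j + k ≤ N, the extended scheme satisfies sup_{x∈ℝ^d} |U^{j+k}(x) − U^j(x)| ≤ t_k (‖D_p^h u₀‖_{L^∞(ℝ^d)} + ‖f‖_{L^∞(ℝ^d)}), where t_k = kτ. -/

import Mathlib

open scoped BigOperators

/-- `J_p(ξ) = |ξ|^{p-2} ξ`. -/
noncomputable def Jp (p ξ : ℝ) : ℝ := |ξ| ^ (p - 2) * ξ

/-- The grid point `y_β = h β ∈ ℝ^d` for `β ∈ ℤ^d`. -/
noncomputable def ygrid (d : ℕ) (h : ℝ) (β : Fin d → ℤ) : EuclideanSpace ℝ (Fin d) :=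
  (WithLp.equiv 2 (Fin d → ℝ)).symm (fun i => h * (β i : ℝ))

/-- The discrete `p`-Laplacian `D_p^h ψ(x) = Σ_β J_p(ψ(x+y_β) - ψ(x)) ω_β`. -/
noncomputable def Dph (d : ℕ) (p h : ℝ) (ω : (Fin d → ℤ) → ℝ)
    (ψ : EuclideanSpace ℝ (Fin d) → ℝ) (x : EuclideanSpace ℝ (Fin d)) : ℝ :=
  ∑ᶠ β, Jp p (ψ (x + ygrid d h β) - ψ x) * ω β

/-
The explicit step `v ↦ v + τ D_p^h v` does not increase the sup-distance between two functions
whose stencil increments `v (x + y_β) - v x` are bounded by `K`, as long as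
`τ (p - 1) K^{p-2} Σ ω_β ≤ 1`: by the mean value theorem for `J_p`, the difference of the two steps
at `x` is a convex combination of the differences at `x` and at the points `x + y_β`.
The CFL condition gives this for `K = (L_{u₀} + T L_f) r^a`, because each `U^j` is `a`-Hölder with
constant `L_{u₀} + t_j L_f`; that bound is itself propagated by the contraction, comparing `U^j`
with its translate. Comparing `U^{j+1}` with `U^j` shows that the increments `U^{j+1} - U^j` never
exceed the first one, `τ (D_p^h u₀ + f)`, and the claim follows by telescoping.
-/

open Function Finset Asymptotics

theorem abs_Jp {p : ℝ} (hp : p ≠ 1) (ξ : ℝ) : |Jp p ξ| = |ξ| ^ (p - 1) := by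
  rw [Jp, abs_mul, abs_of_nonneg (Real.rpow_nonneg (abs_nonneg ξ) _),
    ← Real.rpow_add_one' (abs_nonneg ξ) (by contrapose! hp; linarith)]
  ring_nf

theorem hasDerivAt_Jp {p : ℝ} (hp : 2 ≤ p) (c : ℝ) :
    HasDerivAt (Jp p) ((p - 1) * |c| ^ (p - 2)) c := by
  rcases ne_or_eq c 0 with hc | rfl
  · have hc' : |c| ≠ 0 := abs_ne_zero.2 hc
    refine (((hasDerivAt_abs hc).rpow_const (Or.inl hc')).mul (hasDerivAt_id c)).congr_deriv ?_
    have hsign : (SignType.sign c : ℝ) * c = |c| := sign_mul_self c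
    have hpow : |c| ^ (p - 2 - 1) * |c| = |c| ^ (p - 2) := by
      rw [← Real.rpow_add_one hc']; ring_nf
    simp only [id_eq, mul_one]
    linear_combination ((p - 2) * |c| ^ (p - 2 - 1)) * hsign + (p - 2) * hpow
  rcases hp.eq_or_lt with rfl | hp
  · have hJ2 : Jp 2 = id := funext fun x => by simp [Jp]
    rw [hJ2]; norm_num; exact hasDerivAt_id 0
  -- `|Jp p x| = |x| ^ (p - 1)`, and `|x| ^ (p - 1)` has derivative `0` at `0` since `p - 1 > 1`
  have hpow := hasDerivAt_abs_rpow 0 (by linarith : 1 < p - 1)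
  rw [hasDerivAt_iff_isLittleO_nhds_zero] at hpow ⊢
  rw [← isLittleO_norm_left]
  have h0 : Jp p 0 = 0 := by simp [Jp]
  simpa [h0, abs_Jp (by linarith : p ≠ 1), Real.zero_rpow (by linarith : p - 1 ≠ 0),
    Real.zero_rpow (by linarith : p - 2 ≠ 0)] using hpow

theorem exists_Jp_sub_eq_mul {p K A B : ℝ} (hp : 2 ≤ p) (hA : |A| ≤ K) (hB : |B| ≤ K) :
    ∃ g, 0 ≤ g ∧ g ≤ (p - 1) * K ^ (p - 2) ∧ Jp p A - Jp p B = g * (A - B) := by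
  wlog hBA : B ≤ A generalizing A B
  · obtain ⟨g, hg0, hgK, hg⟩ := this hB hA (le_of_not_ge hBA)
    exact ⟨g, hg0, hgK, by linarith⟩
  have hK : 0 ≤ K := (abs_nonneg A).trans hA
  rcases hBA.eq_or_lt with rfl | hBA
  · exact ⟨0, le_rfl, mul_nonneg (by linarith) (by positivity), by ring⟩
  obtain ⟨c, hc, hslope⟩ := exists_hasDerivAt_eq_slope (Jp p) _ hBA
    (Differentiable.continuous fun x => (hasDerivAt_Jp hp x).differentiableAt).continuousOn
    fun c _ => hasDerivAt_Jp hp c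
  refine ⟨(p - 1) * |c| ^ (p - 2), mul_nonneg (by linarith) (by positivity), ?_, ?_⟩
  · have hcK : |c| ≤ K :=
      abs_le.2 ⟨by linarith [(abs_le.1 hB).1, hc.1], by linarith [(abs_le.1 hA).2, hc.2]⟩
    gcongr; linarith
  · rw [hslope, div_mul_cancel₀ _ (sub_ne_zero.2 hBA.ne')]

theorem finite_setOf_norm_ygrid_lt {d : ℕ} {h : ℝ} (hh : 0 < h) (r : ℝ) :
    {β | ‖ygrid d h β‖ < r}.Finite := by
  refine (Set.finite_Icc (-fun _ => ⌈r / h⌉) fun _ => ⌈r / h⌉).subset fun β hβ => ?_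
  have hβ_le : ∀ i, |β i| ≤ ⌈r / h⌉ := fun i => by
    have : |(β i : ℝ)| * h ≤ r :=
      calc |(β i : ℝ)| * h = ‖ygrid d h β i‖ := by
            simp [ygrid, abs_of_pos hh, mul_comm]
        _ ≤ ‖ygrid d h β‖ := PiLp.norm_apply_le _ i
        _ ≤ r := le_of_lt hβ
    exact_mod_cast ((le_div_iff₀ hh).2 this).trans (Int.le_ceil _)
  exact ⟨fun i => (abs_le.1 (hβ_le i)).1, fun i => (abs_le.1 (hβ_le i)).2⟩

section Dph

variable {d : ℕ} {p h : ℝ} {ω : (Fin d → ℤ) → ℝ}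

theorem Dph_eq_sum (hfin : (support ω).Finite) (ψ : EuclideanSpace ℝ (Fin d) → ℝ)
    (x : EuclideanSpace ℝ (Fin d)) :
    Dph d p h ω ψ x = ∑ β ∈ hfin.toFinset, Jp p (ψ (x + ygrid d h β) - ψ x) * ω β :=
  finsum_eq_sum_of_support_subset _ fun β hβ => by
    simpa using right_ne_zero_of_mul hβ

theorem Dph_comp_add_right (ψ : EuclideanSpace ℝ (Fin d) → ℝ) (z x : EuclideanSpace ℝ (Fin d)) :
    Dph d p h ω (fun y => ψ (y + z)) x = Dph d p h ω ψ (x + z) := by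
  simp only [Dph, add_right_comm x]

theorem bddAbove_range_abs_Dph (hp : 2 ≤ p) (hfin : (support ω).Finite)
    {ψ : EuclideanSpace ℝ (Fin d) → ℝ} (hψ : BddAbove (Set.range fun x => |ψ x|)) :
    BddAbove (Set.range fun x => |Dph d p h ω ψ x|) := by
  obtain ⟨B, hB⟩ := hψ
  have hB' : ∀ x, |ψ x| ≤ B := fun x => hB ⟨x, rfl⟩
  refine ⟨∑ β ∈ hfin.toFinset, (2 * B) ^ (p - 1) * |ω β|, ?_⟩
  rintro _ ⟨x, rfl⟩
  dsimp only
  rw [Dph_eq_sum hfin]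
  refine (abs_sum_le_sum_abs _ _).trans (sum_le_sum fun β _ => ?_)
  have hdiff : |ψ (x + ygrid d h β) - ψ x| ≤ 2 * B := by
    linarith [abs_sub (ψ (x + ygrid d h β)) (ψ x), hB' (x + ygrid d h β), hB' x]
  rw [abs_mul, abs_Jp (by linarith)]
  gcongr
  linarith

end Dph

theorem holder_const_nonneg {E : Type*} [NormedAddCommGroup E] [Nontrivial E] {u : E → ℝ}
    {L a : ℝ} (hu : ∀ x y, |u x - u y| ≤ L * ‖x - y‖ ^ a) : 0 ≤ L := by
  obtain ⟨x, hx⟩ := exists_ne (0 : E)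
  have := (abs_nonneg _).trans (hu x 0)
  rw [sub_zero] at this
  exact nonneg_of_mul_nonneg_left this (Real.rpow_pos_of_pos (norm_pos_iff.2 hx) a)

theorem abs_add_mul_sum_mul_sub_le {ι : Type*} (s : Finset ι) {c e : ι → ℝ} {e₀ τ θ : ℝ}
    (hc : ∀ i ∈ s, 0 ≤ c i) (hτ : 0 ≤ τ) (hτc : τ * ∑ i ∈ s, c i ≤ 1)
    (he₀ : |e₀| ≤ θ) (he : ∀ i ∈ s, |e i| ≤ θ) :
    |e₀ + τ * ∑ i ∈ s, c i * (e i - e₀)| ≤ θ := by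
  have hsplit : e₀ + τ * ∑ i ∈ s, c i * (e i - e₀) =
      (1 - τ * ∑ i ∈ s, c i) * e₀ + τ * ∑ i ∈ s, c i * e i := by
    simp only [mul_sub, sum_sub_distrib, ← sum_mul]; ring
  have hsum : |∑ i ∈ s, c i * e i| ≤ (∑ i ∈ s, c i) * θ := by
    rw [sum_mul]
    refine (abs_sum_le_sum_abs _ _).trans (sum_le_sum fun i hi => ?_)
    rw [abs_mul, abs_of_nonneg (hc i hi)]
    exact mul_le_mul_of_nonneg_left (he i hi) (hc i hi)
  have h1 : 0 ≤ 1 - τ * ∑ i ∈ s, c i := sub_nonneg.2 hτc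
  calc |e₀ + τ * ∑ i ∈ s, c i * (e i - e₀)|
      ≤ |(1 - τ * ∑ i ∈ s, c i) * e₀| + |τ * ∑ i ∈ s, c i * e i| := hsplit ▸ abs_add_le _ _
    _ ≤ (1 - τ * ∑ i ∈ s, c i) * θ + τ * ((∑ i ∈ s, c i) * θ) := by
      rw [abs_mul, abs_mul, abs_of_nonneg h1, abs_of_nonneg hτ]
      gcongr
    _ = θ := by ring

theorem abs_sub_le_mul_of_abs_succ_sub_le {u : ℕ → ℝ} {δ : ℝ} {j k : ℕ}
    (hu : ∀ i, j ≤ i → i < j + k → |u (i + 1) - u i| ≤ δ) : |u (j + k) - u j| ≤ k * δ := by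
  have := dist_le_Ico_sum_of_dist_le (f := u) (d := fun _ => δ) (Nat.le_add_right j k)
    fun hji hik => by rw [Real.dist_eq, abs_sub_comm]; exact hu _ hji hik
  simpa [Real.dist_eq, abs_sub_comm] using this

theorem cfl_stencil_coeff_le_one {p τ M r a H S : ℝ} (hp : 1 ≤ p) (hτ : 0 ≤ τ) (hr : 0 < r)
    (hH : 0 ≤ H) (hS : S ≤ M * r ^ (-p))
    (hCFL : τ * (p - 1) * M * H ^ (p - 2) ≤ r ^ (2 + (1 - a) * (p - 2))) :
    τ * ((p - 1) * (H * r ^ a) ^ (p - 2)) * S ≤ 1 := by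
  have hr_pow : r ^ (2 + (1 - a) * (p - 2)) * (r ^ (a * (p - 2)) * r ^ (-p)) = 1 := by
    rw [← Real.rpow_add hr, ← Real.rpow_add hr,
      show 2 + (1 - a) * (p - 2) + (a * (p - 2) + -p) = 0 by ring, Real.rpow_zero]
  have hcoef : 0 ≤ τ * (p - 1) * H ^ (p - 2) := by
    have := sub_nonneg.2 hp; positivity
  calc τ * ((p - 1) * (H * r ^ a) ^ (p - 2)) * S
      = τ * (p - 1) * H ^ (p - 2) * S * r ^ (a * (p - 2)) := by
        rw [Real.mul_rpow hH (by positivity), ← Real.rpow_mul hr.le]; ring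
    _ ≤ τ * (p - 1) * H ^ (p - 2) * (M * r ^ (-p)) * r ^ (a * (p - 2)) := by gcongr
    _ = τ * (p - 1) * M * H ^ (p - 2) * (r ^ (a * (p - 2)) * r ^ (-p)) := by ring
    _ ≤ r ^ (2 + (1 - a) * (p - 2)) * (r ^ (a * (p - 2)) * r ^ (-p)) := by gcongr
    _ = 1 := hr_pow

section Scheme

variable {d : ℕ} {p h τ : ℝ} {ω : (Fin d → ℤ) → ℝ}

theorem abs_step_sub_step_le (hp : 2 ≤ p) (hτ : 0 ≤ τ) (hnn : ∀ β, 0 ≤ ω β)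
    (hfin : (support ω).Finite) {K θ : ℝ}
    (hcoef : τ * ((p - 1) * K ^ (p - 2)) * ∑ᶠ β, ω β ≤ 1)
    {v w : EuclideanSpace ℝ (Fin d) → ℝ}
    (hv : ∀ x β, ω β ≠ 0 → |v (x + ygrid d h β) - v x| ≤ K)
    (hw : ∀ x β, ω β ≠ 0 → |w (x + ygrid d h β) - w x| ≤ K)
    (hvw : ∀ z, |v z - w z| ≤ θ) (x : EuclideanSpace ℝ (Fin d)) :
    |v x + τ * Dph d p h ω v x - (w x + τ * Dph d p h ω w x)| ≤ θ := by
  set S := hfin.toFinset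
  have hS : ∀ β ∈ S, ω β ≠ 0 := fun β hβ => hfin.mem_toFinset.1 hβ
  choose! g hg0 hgK hg using fun β (hβ : β ∈ S) =>
    exists_Jp_sub_eq_mul hp (hv x β (hS β hβ)) (hw x β (hS β hβ))
  have hD : Dph d p h ω v x - Dph d p h ω w x = ∑ β ∈ S, g β * ω β *
      ((v (x + ygrid d h β) - w (x + ygrid d h β)) - (v x - w x)) := by
    rw [Dph_eq_sum hfin, Dph_eq_sum hfin, ← sum_sub_distrib]
    refine sum_congr rfl fun β hβ => ?_
    rw [← sub_mul, hg β hβ]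
    ring
  have hτg : τ * ∑ β ∈ S, g β * ω β ≤ 1 := by
    refine le_trans ?_ hcoef
    rw [finsum_eq_sum ω hfin, mul_assoc, mul_sum _ _ ((p - 1) * K ^ (p - 2))]
    gcongr with β hβ
    exacts [hnn β, hgK β hβ]
  calc |v x + τ * Dph d p h ω v x - (w x + τ * Dph d p h ω w x)|
      = |(v x - w x) + τ * ∑ β ∈ S, g β * ω β *
          ((v (x + ygrid d h β) - w (x + ygrid d h β)) - (v x - w x))| := by
        rw [← hD]; ring_nf
    _ ≤ θ := abs_add_mul_sum_mul_sub_le S (fun β hβ => mul_nonneg (hg0 β hβ) (hnn β)) hτ hτg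
        (hvw x) fun β _ => hvw _

theorem abs_sub_le_of_holder_of_ne_zero {r a C H : ℝ}
    (hzero : ∀ β, r ≤ ‖ygrid d h β‖ → ω β = 0) (ha : 0 ≤ a) (hC : 0 ≤ C) (hCH : C ≤ H)
    {ψ : EuclideanSpace ℝ (Fin d) → ℝ} (hψ : ∀ x y, |ψ x - ψ y| ≤ C * ‖x - y‖ ^ a)
    (x : EuclideanSpace ℝ (Fin d)) (β : Fin d → ℤ) (hβ : ω β ≠ 0) :
    |ψ (x + ygrid d h β) - ψ x| ≤ H * r ^ a := by
  have hβr : ‖ygrid d h β‖ < r := lt_of_not_ge fun hle => hβ (hzero β hle)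
  calc |ψ (x + ygrid d h β) - ψ x| ≤ C * ‖ygrid d h β‖ ^ a := by
        simpa using hψ (x + ygrid d h β) x
    _ ≤ H * r ^ a := by
        have : 0 ≤ r := (norm_nonneg _).trans hβr.le
        have : 0 ≤ H := hC.trans hCH
        gcongr

variable {f : EuclideanSpace ℝ (Fin d) → ℝ} {U : ℕ → EuclideanSpace ℝ (Fin d) → ℝ}

theorem scheme_holder_bound {r a Lu Lf : ℝ} {N : ℕ} (hp : 2 ≤ p) (hτ : 0 ≤ τ)
    (hnn : ∀ β, 0 ≤ ω β) (hfin : (support ω).Finite)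
    (hzero : ∀ β, r ≤ ‖ygrid d h β‖ → ω β = 0) (ha : 0 ≤ a)
    (hLu : 0 ≤ Lu) (hLf : 0 ≤ Lf)
    (hcoef : τ * ((p - 1) * ((Lu + N * τ * Lf) * r ^ a) ^ (p - 2)) * ∑ᶠ β, ω β ≤ 1)
    (hU0 : ∀ x y, |U 0 x - U 0 y| ≤ Lu * ‖x - y‖ ^ a)
    (hf : ∀ x y, |f x - f y| ≤ Lf * ‖x - y‖ ^ a)
    (hUrec : ∀ j x, U (j + 1) x = U j x + τ * (Dph d p h ω (U j) x + f x)) :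
    ∀ j ≤ N, ∀ x y, |U j x - U j y| ≤ (Lu + j * τ * Lf) * ‖x - y‖ ^ a := by
  intro j
  induction j with
  | zero => simpa using hU0
  | succ j ih =>
    intro hj x y
    have hU := ih (by omega)
    have hC : 0 ≤ Lu + j * τ * Lf := by positivity
    have hCH : Lu + j * τ * Lf ≤ Lu + N * τ * Lf := by
      have : (j : ℝ) ≤ N := by exact_mod_cast (by omega : j ≤ N)
      gcongr
    have hshift : ∀ z, z - (z + (y - x)) = x - y := fun z => by abel
    have hw : ∀ z z', |U j (z + (y - x)) - U j (z' + (y - x))| ≤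
        (Lu + j * τ * Lf) * ‖z - z'‖ ^ a := fun z z' => by
      simpa using hU (z + (y - x)) (z' + (y - x))
    have hstep := abs_step_sub_step_le (h := h) (θ := (Lu + j * τ * Lf) * ‖x - y‖ ^ a)
      hp hτ hnn hfin hcoef (abs_sub_le_of_holder_of_ne_zero hzero ha hC hCH hU)
      (abs_sub_le_of_holder_of_ne_zero hzero ha hC hCH hw)
      (fun z => by simpa [hshift] using hU z (z + (y - x))) x
    rw [Dph_comp_add_right, add_sub_cancel] at hstep
    calc |U (j + 1) x - U (j + 1) y|
        = |(U j x + τ * Dph d p h ω (U j) x - (U j y + τ * Dph d p h ω (U j) y)) +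
            τ * (f x - f y)| := by rw [hUrec, hUrec]; ring_nf
      _ ≤ (Lu + j * τ * Lf) * ‖x - y‖ ^ a + τ * (Lf * ‖x - y‖ ^ a) := by
        refine (abs_add_le _ _).trans (add_le_add hstep ?_)
        rw [abs_mul, abs_of_nonneg hτ]
        exact mul_le_mul_of_nonneg_left (hf x y) hτ
      _ = (Lu + ↑(j + 1) * τ * Lf) * ‖x - y‖ ^ a := by push_cast; ring

theorem abs_succ_sub_le_of_abs_one_sub_le {N : ℕ} (hp : 2 ≤ p) (hτ : 0 ≤ τ)
    (hnn : ∀ β, 0 ≤ ω β) (hfin : (support ω).Finite) {K δ : ℝ}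
    (hcoef : τ * ((p - 1) * K ^ (p - 2)) * ∑ᶠ β, ω β ≤ 1)
    (hstencil : ∀ j ≤ N, ∀ x β, ω β ≠ 0 → |U j (x + ygrid d h β) - U j x| ≤ K)
    (hUrec : ∀ j x, U (j + 1) x = U j x + τ * (Dph d p h ω (U j) x + f x))
    (h1 : ∀ x, |U 1 x - U 0 x| ≤ δ) :
    ∀ j, j + 1 ≤ N → ∀ x, |U (j + 1) x - U j x| ≤ δ := by
  intro j
  induction j with
  | zero => exact fun _ => h1
  | succ j ih =>
    intro hj x
    have hstep := abs_step_sub_step_le hp hτ hnn hfin hcoef (hstencil (j + 1) (by omega))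
      (hstencil j (by omega)) (ih (by omega)) x
    have hdiff : U (j + 1 + 1) x - U (j + 1) x = U (j + 1) x + τ * Dph d p h ω (U (j + 1)) x -
        (U j x + τ * Dph d p h ω (U j) x) := by
      rw [hUrec (j + 1) x, hUrec j x]; ring
    rwa [hdiff]

end Scheme

theorem scheme_time_increment_bound_general (d : ℕ) (hd : 1 ≤ d) (p : ℝ) (hp : 2 ≤ p)
    (h r τ : ℝ) (hh : 0 < h) (hr : 0 < r) (hτ : 0 < τ) (N : ℕ) (M : ℝ)
    (ω : (Fin d → ℤ) → ℝ) (hnn : ∀ β, 0 ≤ ω β)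
    (hzero : ∀ β, r ≤ ‖ygrid d h β‖ → ω β = 0)
    (hsum : ∑ᶠ β, ω β ≤ M * r ^ (-p))
    (a Lu Lf : ℝ) (ha0 : 0 < a)
    (u₀ f : EuclideanSpace ℝ (Fin d) → ℝ)
    (hu₀b : BddAbove (Set.range fun x => |u₀ x|))
    (hfb : BddAbove (Set.range fun x => |f x|))
    (hu₀ : ∀ x y, |u₀ x - u₀ y| ≤ Lu * ‖x - y‖ ^ a)
    (hf : ∀ x y, |f x - f y| ≤ Lf * ‖x - y‖ ^ a)
    (U : ℕ → EuclideanSpace ℝ (Fin d) → ℝ)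
    (hU0 : ∀ x, U 0 x = u₀ x)
    (hUrec : ∀ j x, U (j + 1) x = U j x + τ * (Dph d p h ω (U j) x + f x))
    (hCFL : τ * (p - 1) * M * (Lu + (N : ℝ) * τ * Lf) ^ (p - 2) ≤
      r ^ (2 + (1 - a) * (p - 2))) :
    ∀ j k, j + k ≤ N → ∀ x,
      |U (j + k) x - U j x| ≤
        (k : ℝ) * τ * ((⨆ x, |Dph d p h ω u₀ x|) + ⨆ x, |f x|) := by
  have hfin : (support ω).Finite := (finite_setOf_norm_ygrid_lt hh r).subset
    fun β hβ => lt_of_not_ge fun hle => hβ (hzero β hle)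
  have : Nonempty (Fin d) := ⟨⟨0, hd⟩⟩
  have hLu := holder_const_nonneg hu₀
  have hLf := holder_const_nonneg hf
  have hH : 0 ≤ Lu + N * τ * Lf := by positivity
  have hcoef := cfl_stencil_coeff_le_one (by linarith) hτ.le hr hH hsum hCFL
  have hU0' : U 0 = u₀ := funext hU0
  have hholder := scheme_holder_bound hp hτ.le hnn hfin hzero ha0.le hLu hLf hcoef
    (hU0' ▸ hu₀) hf hUrec
  have hstencil : ∀ j ≤ N, ∀ x β, ω β ≠ 0 →
      |U j (x + ygrid d h β) - U j x| ≤ (Lu + N * τ * Lf) * r ^ a := fun j hj =>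
    abs_sub_le_of_holder_of_ne_zero hzero ha0.le (by positivity) (by gcongr) (hholder j hj)
  have h1 : ∀ x, |U 1 x - U 0 x| ≤ τ * ((⨆ x, |Dph d p h ω u₀ x|) + ⨆ x, |f x|) := fun x => by
    rw [hUrec, hU0', add_sub_cancel_left, abs_mul, abs_of_pos hτ]
    gcongr
    exact (abs_add_le _ _).trans (add_le_add
      (le_ciSup (bddAbove_range_abs_Dph hp hfin hu₀b) x) (le_ciSup hfb x))
  intro j k hjk x
  rw [mul_assoc]
  exact abs_sub_le_mul_of_abs_succ_sub_le (u := fun i => U i x) fun i _ hi =>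
    abs_succ_sub_le_of_abs_one_sub_le hp hτ.le hnn hfin hcoef hstencil hUrec h1 i (by omega) x

/-- Discrete equicontinuity in time: `‖U^{j+k} - U^j‖_∞ ≤ t_k (‖D_p^h u₀‖_∞ + ‖f‖_∞)`. -/
theorem scheme_time_increment_bound (d : ℕ) (hd : 1 ≤ d) (p : ℝ) (hp : 2 ≤ p)
    (h r τ : ℝ) (hh : 0 < h) (hr : 0 < r) (hτ : 0 < τ) (N : ℕ) (M : ℝ) (hM : 0 < M)
    (ω : (Fin d → ℤ) → ℝ) (hsym : ∀ β, ω (-β) = ω β) (hnn : ∀ β, 0 ≤ ω β)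
    (hzero : ∀ β, r ≤ ‖ygrid d h β‖ → ω β = 0)
    (hsum : ∑ᶠ β, ω β ≤ M * r ^ (-p))
    (a Lu Lf : ℝ) (ha0 : 0 < a) (ha1 : a ≤ 1)
    (u₀ f : EuclideanSpace ℝ (Fin d) → ℝ)
    (hu₀b : BddAbove (Set.range fun x => |u₀ x|))
    (hfb : BddAbove (Set.range fun x => |f x|))
    (hu₀ : ∀ x y, |u₀ x - u₀ y| ≤ Lu * ‖x - y‖ ^ a)
    (hf : ∀ x y, |f x - f y| ≤ Lf * ‖x - y‖ ^ a)
    (U : ℕ → EuclideanSpace ℝ (Fin d) → ℝ)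
    (hU0 : ∀ x, U 0 x = u₀ x)
    (hUrec : ∀ j x, U (j + 1) x = U j x + τ * (Dph d p h ω (U j) x + f x))
    (hCFL : τ * (p - 1) * M * (Lu + (N : ℝ) * τ * Lf) ^ (p - 2) ≤
      r ^ (2 + (1 - a) * (p - 2))) :
    ∀ j k, j + k ≤ N → ∀ x,
      |U (j + k) x - U j x| ≤
        (k : ℝ) * τ * ((⨆ x, |Dph d p h ω u₀ x|) + ⨆ x, |f x|) :=
  scheme_time_increment_bound_general d hd p hp h r τ hh hr hτ N M ω hnn hzero hsum a Lu Lf ha0 u₀ f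
    hu₀b hfb hu₀ hf U hU0 hUrec hCFL
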